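/- For all indices u, w with 0 ≤ u < w ≤ n−1, lcp(SA[u], SA[w]) = min{ LCP[k] : u < k ≤ w } (the range-minimum property of the LCP-array). -/
import Mathlib


/-- The suffix `S_i = T[i..n)` of the text `T` of length `n`, as a list. -/
def suff {α : Type*} (T : ℕ → α) (n i : ℕ) : List α :=
  (List.range (n - i)).map (fun t => T (i + t))

/-- `S_i` has type B: there is a `k ≥ i` with `T[k] < T[k+1]` and
`T[m] = T[m+1]` for all `i ≤ m < k`. -/
def TypeB {α : Type*} [LinearOrder α] (T : ℕ → α) (n i : ℕ) : Prop :=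
  ∃ k, i ≤ k ∧ k + 1 < n ∧ T k < T (k + 1) ∧ ∀ m, i ≤ m → m < k → T m = T (m + 1)

/-- `S_i` has type A: either there is a `k ≥ i` with `T[k] > T[k+1]` and
`T[m] = T[m+1]` for all `i ≤ m < k`, or all characters from position `i`
to the end are equal (the type propagates from `S_{n-1}`). -/
def TypeA {α : Type*} [LinearOrder α] (T : ℕ → α) (n i : ℕ) : Prop :=
  (∃ k, i ≤ k ∧ k + 1 < n ∧ T (k + 1) < T k ∧ ∀ m, i ≤ m → m < k → T m = T (m + 1))
  ∨ (∀ m, i ≤ m → m + 1 < n → T m = T (m + 1))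

/-- `S_i` is a B*-suffix: `S_i` has type B and `S_{i+1}` has type A. -/
def TypeBStar {α : Type*} [LinearOrder α] (T : ℕ → α) (n i : ℕ) : Prop :=
  TypeB T n i ∧ TypeA T n (i + 1)

/-- `lcp T n i j` is the largest `s ≥ 0` with `i + s ≤ n`, `j + s ≤ n` and
`T[i+t] = T[j+t]` for all `t < s`. -/
noncomputable def lcp {α : Type*} (T : ℕ → α) (n i j : ℕ) : ℕ :=
  sSup {s | i + s ≤ n ∧ j + s ≤ n ∧ ∀ t, t < s → T (i + t) = T (j + t)}

section Aux
variable {α : Type*} [LinearOrder α] (T : ℕ → α) (n : ℕ)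

lemma suff_nil (i : ℕ) (h : n ≤ i) : suff T n i = [] := by
  unfold suff; rw [Nat.sub_eq_zero_of_le h]; rfl

lemma suff_cons (i : ℕ) (h : i < n) : suff T n i = T i :: suff T n (i+1) := by
  unfold suff
  have h1 : n - i = (n - (i+1)) + 1 := by omega
  rw [h1, List.range_succ_eq_map, List.map_cons, List.map_map]
  simp only [Nat.add_zero, List.cons.injEq, true_and]
  congr 1
  funext t
  simp only [Function.comp_apply]
  congr 1
  omega

lemma suff_lex (a b s : ℕ) (hb : b + s < n) (heq : ∀ t, t < s → T (a+t) = T (b+t))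
    (hend : a + s = n ∨ (a + s < n ∧ T (a+s) < T (b+s))) :
    List.Lex (· < ·) (suff T n a) (suff T n b) := by
  induction s generalizing a b with
  | zero =>
    rcases hend with h | ⟨h, hlt⟩
    · rw [Nat.add_zero] at h hb
      rw [suff_nil T n a (le_of_eq h.symm), suff_cons T n b hb]
      exact List.Lex.nil
    · rw [Nat.add_zero] at *
      rw [suff_cons T n a h, suff_cons T n b hb]
      exact List.Lex.rel hlt
  | succ s ih =>
    have ha : a < n := by omega
    have hb' : b < n := by omega
    rw [suff_cons T n a ha, suff_cons T n b hb']
    have h0 : T a = T b := by have := heq 0 (by omega); simpa using this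
    rw [h0]
    apply List.Lex.cons
    apply ih
    · omega
    · intro t ht
      have := heq (t+1) (by omega)
      convert this using 2 <;> omega
    · rcases hend with h | ⟨h, hlt⟩
      · left; omega
      · right
        refine ⟨by omega, ?_⟩
        convert hlt using 2 <;> omega

lemma lex_asymm {l m : List α} (h : List.Lex (· < ·) l m) :
    ¬ List.Lex (· < ·) m l := by
  exact asymm h

lemma lcp_mem (i j : ℕ) (hi : i ≤ n) (hj : j ≤ n) :
    i + lcp T n i j ≤ n ∧ j + lcp T n i j ≤ n ∧
    ∀ t, t < lcp T n i j → T (i + t) = T (j + t) := by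
  have hne : {s | i + s ≤ n ∧ j + s ≤ n ∧ ∀ t, t < s → T (i + t) = T (j + t)}.Nonempty :=
    ⟨0, by simp [hi, hj]⟩
  have hbdd : BddAbove {s | i + s ≤ n ∧ j + s ≤ n ∧ ∀ t, t < s → T (i + t) = T (j + t)} :=
    ⟨n, fun s hs => le_trans (Nat.le_add_left _ _) hs.1⟩
  exact Nat.sSup_mem hne hbdd

lemma le_lcp (i j s : ℕ) (h1 : i + s ≤ n) (h2 : j + s ≤ n)
    (h3 : ∀ t, t < s → T (i + t) = T (j + t)) : s ≤ lcp T n i j :=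
  le_csSup ⟨n, fun x hx => le_trans (Nat.le_add_left _ _) hx.1⟩ ⟨h1, h2, h3⟩

lemma lcp_max (i j : ℕ) (hi : i ≤ n) (hj : j ≤ n) :
    i + lcp T n i j = n ∨ j + lcp T n i j = n ∨
    T (i + lcp T n i j) ≠ T (j + lcp T n i j) := by
  by_contra h
  push_neg at h
  obtain ⟨h1, h2, h3⟩ := h
  obtain ⟨hm1, hm2, hm3⟩ := lcp_mem T n i j hi hj
  have : lcp T n i j + 1 ≤ lcp T n i j := by
    apply le_lcp T n i j _ (by omega) (by omega)
    intro t ht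
    rcases Nat.lt_or_ge t (lcp T n i j) with h | h
    · exact hm3 t h
    · have heq : t = lcp T n i j := by omega
      rw [heq]; exact h3
  omega

lemma lcp_sandwich (x y z : ℕ) (hx : x ≤ n) (hy : y ≤ n) (hz : z ≤ n)
    (hxy : List.Lex (· < ·) (suff T n x) (suff T n y))
    (hyz : List.Lex (· < ·) (suff T n y) (suff T n z)) :
    lcp T n x z = min (lcp T n x y) (lcp T n y z) := by
  obtain ⟨hC1, hC2, hC3⟩ := lcp_mem T n x z hx hz
  obtain ⟨hA1, hA2, hA3⟩ := lcp_mem T n x y hx hy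
  obtain ⟨hB1, hB2, hB3⟩ := lcp_mem T n y z hy hz
  set A := lcp T n x y with hA
  set B := lcp T n y z with hB
  set C := lcp T n x z with hC
  apply le_antisymm
  · by_contra hcon
    push_neg at hcon
    rcases le_total A B with hab | hab
    · have hAC : A < C := by omega
      have hxA : x + A < n := by omega
      by_cases hyn : y + A = n
      · exact lex_asymm hxy (suff_lex T n y x A (by omega)
          (fun t ht => (hA3 t ht).symm) (Or.inl hyn))
      · have hyA : y + A < n := lt_of_le_of_ne hA2 hyn
        have hne : T (x+A) ≠ T (y+A) := by
          rcases lcp_max T n x y hx hy with h|h|h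
          · omega
          · omega
          · exact h
        rcases lt_or_gt_of_ne hne with hlt | hgt
        · have hz3 : ∀ t, t < A → T (z+t) = T (y+t) := fun t ht =>
            ((hC3 t (by omega)).symm.trans (hA3 t ht))
          have hzy : T (z+A) < T (y+A) := by rw [← hC3 A hAC]; exact hlt
          exact lex_asymm hyz (suff_lex T n z y A (by omega) hz3
            (Or.inr ⟨by omega, hzy⟩))
        · exact lex_asymm hxy (suff_lex T n y x A (by omega)
            (fun t ht => (hA3 t ht).symm) (Or.inr ⟨hyA, hgt⟩))
    · have hBC : B < C := by omega
      have hzB : z + B < n := by omega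
      by_cases hyn : y + B = n
      · have hx3 : ∀ t, t < B → T (y+t) = T (x+t) := fun t ht =>
          (hB3 t ht).trans (hC3 t (by omega)).symm
        exact lex_asymm hxy (suff_lex T n y x B (by omega) hx3 (Or.inl hyn))
      · have hyB : y + B < n := lt_of_le_of_ne hB1 hyn
        have hne : T (y+B) ≠ T (z+B) := by
          rcases lcp_max T n y z hy hz with h|h|h
          · omega
          · omega
          · exact h
        rcases lt_or_gt_of_ne hne with hlt | hgt
        · have hyx : T (y+B) < T (x+B) := by rw [hC3 B hBC]; exact hlt
          have hx3 : ∀ t, t < B → T (y+t) = T (x+t) := fun t ht =>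
            (hB3 t ht).trans (hC3 t (by omega)).symm
          exact lex_asymm hxy (suff_lex T n y x B (by omega) hx3
            (Or.inr ⟨hyB, hyx⟩))
        · exact lex_asymm hyz (suff_lex T n z y B (by omega)
            (fun t ht => (hB3 t ht).symm) (Or.inr ⟨hzB, hgt⟩))
  · apply le_lcp
    · omega
    · omega
    · intro t ht
      exact (hA3 t (lt_of_lt_of_le ht (min_le_left _ _))).trans
        (hB3 t (lt_of_lt_of_le ht (min_le_right _ _)))

end Aux


/-- Range-minimum property of the LCP-array:
`lcp(SA[u], SA[w]) = min { LCP[k] : u < k ≤ w }` for `0 ≤ u < w ≤ n - 1`. -/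
theorem stmt_9 {α : Type*} [LinearOrder α] (T : ℕ → α) (n : ℕ) (hn : 1 ≤ n)
    (SA LCPA : ℕ → ℕ)
    (hSAlt : ∀ u, u < n → SA u < n)
    (hSAsorted : ∀ u v, u < v → v < n →
      List.Lex (· < ·) (suff T n (SA u)) (suff T n (SA v)))
    (hSAsurj : ∀ p, p < n → ∃ u, u < n ∧ SA u = p)
    (hLCPA : ∀ k, 1 ≤ k → k < n → LCPA k = lcp T n (SA (k - 1)) (SA k))
    (u w : ℕ) (huw : u < w) (hw : w ≤ n - 1) :
    lcp T n (SA u) (SA w) = sInf (LCPA '' {k | u < k ∧ k ≤ w}) := by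
  induction w with
  | zero => omega
  | succ w ih =>
    have hwn : w + 1 < n := by omega
    rcases Nat.lt_or_ge u w with huw' | hge
    · have hw' : w ≤ n - 1 := by omega
      have hset : {k | u < k ∧ k ≤ w + 1} = {k | u < k ∧ k ≤ w} ∪ {w+1} := by
        ext k; simp only [Set.mem_setOf_eq, Set.mem_union, Set.mem_singleton_iff]; omega
      have hkey := lcp_sandwich T n (SA u) (SA w) (SA (w+1))
        (le_of_lt (hSAlt u (by omega))) (le_of_lt (hSAlt w (by omega)))
        (le_of_lt (hSAlt (w+1) hwn))
        (hSAsorted u w huw' (by omega)) (hSAsorted w (w+1) (by omega) hwn)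
      have hne : (LCPA '' {k | u < k ∧ k ≤ w}).Nonempty :=
        ⟨LCPA (u+1), Set.mem_image_of_mem _ ⟨by omega, by omega⟩⟩
      rw [hset, Set.image_union, Set.image_singleton,
        csInf_union (OrderBot.bddBelow _) hne
          (OrderBot.bddBelow _) (Set.singleton_nonempty _),
        csInf_singleton, hkey, ← ih huw' hw', hLCPA (w+1) (by omega) hwn]
      simp only [Nat.add_sub_cancel]
    · have hu : u = w := by omega
      subst hu
      have hset : {k | u < k ∧ k ≤ u + 1} = {u+1} := by
        ext k; simp only [Set.mem_setOf_eq, Set.mem_singleton_iff]; omega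
      rw [hset, Set.image_singleton, csInf_singleton, hLCPA (u+1) (by omega) hwn]
      simp
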